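/- Let G=(V,E) be a weighted graph with boundary ∂=A⊔B⊔C, fix integers n≥2 and even m≥2, and let q:V→P_{2n} satisfy q≡q_A on A and q≡q_B on B. Then for every path L∈𝒫_{A,B}: Σ_{e={x,y}∈L} d(q(x),q(y)) ≥ 2(n−δ_{b_L,(1,…,1)}), where b_L is the bitwise AND over the vertices v of L of the bit strings b(q(v)); moreover Σ_{e={x,y}∈L} d(q(x),q(y)) is an even integer. -/

import Mathlib

open scoped Classical

noncomputable section

namespace RTN

/-! ## Set partitions -/

/-- Number of blocks of a set partition (as an integer). -/
def nb {α : Type*} (p : Setoid α) : ℤ := Nat.card (Quotient p)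

/-- The partition distance `d(p,q) = #(p) + #(q) - 2 #(p ⊔ q)`. -/
def pdist {α : Type*} (p q : Setoid α) : ℤ := nb p + nb q - 2 * nb (p ⊔ q)

lemma pdist_comm {α : Type*} (p q : Setoid α) : pdist p q = pdist q p := by
  unfold pdist
  rw [sup_comm p q]
  ring

/-- `k` is a singlet (block of size one) of the partition `p`. -/
def IsSinglet {α : Type*} (p : Setoid α) (k : α) : Prop := ∀ y, p.r k y → y = k

/-- The number of singlets `#₁(p)` of a partition. -/
def nS {α : Type*} (p : Setoid α) : ℤ := Nat.card {k : α // IsSinglet p k}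

/-- The singlet distance `d₁(s₁,s₂) = #₁(s₁) + #₁(s₂) - 2 #₁(s₁ ⊔ s₂)`. -/
def sdist {α : Type*} (s₁ s₂ : Setoid α) : ℤ := nS s₁ + nS s₂ - 2 * nS (s₁ ⊔ s₂)

/-- The singlet pattern `s(p)`: the coarsest partition whose singlets are exactly
those of `p` (all non-singlet elements lie in one block). -/
def spat {α : Type*} (p : Setoid α) : Setoid α where
  r x y := x = y ∨ (¬ IsSinglet p x ∧ ¬ IsSinglet p y)
  iseqv := by
    refine ⟨fun x => Or.inl rfl, ?_, ?_⟩
    · intro x y h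
      rcases h with rfl | ⟨hx, hy⟩
      · exact Or.inl rfl
      · exact Or.inr ⟨hy, hx⟩
    · intro x y z h1 h2
      rcases h1 with rfl | ⟨hx, hy⟩
      · exact h2
      · rcases h2 with rfl | ⟨_, hz⟩
        · exact Or.inr ⟨hx, hy⟩
        · exact Or.inr ⟨hx, hz⟩

/-- The bit `b^k(p)`: `0` if `p` has a singlet at `k`, else `1`. -/
def bbit {α : Type*} (p : Setoid α) (k : α) : ℤ := if IsSinglet p k then 0 else 1

/-- The size of the block of `p` containing `x`. -/
def blockSize {α : Type*} (p : Setoid α) (x : α) : ℕ := Nat.card {y : α // p.r x y}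

noncomputable instance {α : Type*} [Finite α] (s : Setoid α) : Fintype (Quotient s) :=
  Fintype.ofFinite _

/-! ## Permutations -/

/-- The partition of `α` into orbits (cycles) of a permutation. -/
def orbitSetoid {α : Type*} (g : Equiv.Perm α) : Setoid α where
  r x y := ∃ k : ℤ, (g ^ k) x = y
  iseqv := by
    refine ⟨fun x => ⟨0, by simp⟩, ?_, ?_⟩
    · rintro x y ⟨k, rfl⟩
      exact ⟨-k, by simp [← Equiv.Perm.mul_apply, ← zpow_add]⟩
    · rintro x y z ⟨k, rfl⟩ ⟨l, rfl⟩
      exact ⟨l + k, by rw [zpow_add, Equiv.Perm.mul_apply]⟩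

/-- The number of cycles `#(g)` of a permutation (fixed points included). -/
def ncyc {α : Type*} (g : Equiv.Perm α) : ℤ := nb (orbitSetoid g)

/-- The Cayley distance `d(g,h) = N - #(g h⁻¹)`. -/
def cayley {α : Type*} [Fintype α] (g h : Equiv.Perm α) : ℤ :=
  (Fintype.card α : ℤ) - ncyc (g * h⁻¹)

lemma orbitSetoid_inv {α : Type*} (g : Equiv.Perm α) : orbitSetoid g⁻¹ = orbitSetoid g := by
  apply Setoid.ext
  intro x y
  constructor
  · rintro ⟨k, hk⟩
    exact ⟨-k, by rw [← inv_zpow']; exact hk⟩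
  · rintro ⟨k, hk⟩
    exact ⟨-k, by rw [inv_zpow', neg_neg]; exact hk⟩

lemma cayley_comm {α : Type*} [Fintype α] (g h : Equiv.Perm α) : cayley g h = cayley h g := by
  unfold cayley ncyc
  rw [show h * g⁻¹ = (g * h⁻¹)⁻¹ by rw [mul_inv_rev, inv_inv], orbitSetoid_inv]

/-- Coarse graining of a partition `p` by the blocks of `P(g₀)`: the partition of the set
of blocks of `P(g₀)` induced by `p ⊔ P(g₀)`. -/
def coarse {α : Type*} (g₀ : Equiv.Perm α) (p : Setoid α) :
    Setoid (Quotient (orbitSetoid g₀)) where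
  r u v := ∃ x y : α, Quotient.mk (orbitSetoid g₀) x = u ∧ Quotient.mk (orbitSetoid g₀) y = v ∧
    (p ⊔ orbitSetoid g₀).r x y
  iseqv := by
    refine ⟨?_, ?_, ?_⟩
    · intro u
      obtain ⟨x, rfl⟩ := Quotient.exists_rep u
      exact ⟨x, x, rfl, rfl, (p ⊔ orbitSetoid g₀).iseqv.refl x⟩
    · rintro u v ⟨x, y, hx, hy, hxy⟩
      exact ⟨y, x, hy, hx, (p ⊔ orbitSetoid g₀).iseqv.symm hxy⟩
    · rintro u v w ⟨x, y, hx, hy, hxy⟩ ⟨y', z, hy', hz, hyz⟩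
      refine ⟨x, z, hx, hz, ?_⟩
      have h1 : (orbitSetoid g₀).r y y' := Quotient.exact (hy.trans hy'.symm)
      have h2 : (p ⊔ orbitSetoid g₀).r y y' :=
        (le_sup_right : orbitSetoid g₀ ≤ p ⊔ orbitSetoid g₀) h1
      exact (p ⊔ orbitSetoid g₀).iseqv.trans hxy
        ((p ⊔ orbitSetoid g₀).iseqv.trans h2 hyz)

/-- The coarse graining `q_{g₀}(g) ∈ P_{#(g₀)}` of a permutation `g`. -/
def qc {α : Type*} (g₀ g : Equiv.Perm α) : Setoid (Quotient (orbitSetoid g₀)) :=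
  coarse g₀ (orbitSetoid g)

/-! ## Standard reflected-entropy boundary elements -/

/-- `g_B`, the product of `n` disjoint `m`-cycles `(k,ℓ) ↦ (k,ℓ+1)`. -/
def gB (n m : ℕ) : Equiv.Perm (Fin n × Fin m) :=
  Equiv.prodCongr (Equiv.refl (Fin n)) (finRotate m)

/-- `γ`, cyclically shifting `k ↦ k+1` on the elements with `ℓ` in the lower half,
fixing the rest. -/
def gamma (n m : ℕ) : Equiv.Perm (Fin n × Fin m) where
  toFun x := if m / 2 ≤ (x.2 : ℕ) then (finRotate n x.1, x.2) else x
  invFun x := if m / 2 ≤ (x.2 : ℕ) then ((finRotate n).symm x.1, x.2) else x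
  left_inv := by
    intro x
    by_cases h : m / 2 ≤ (x.2 : ℕ) <;> simp [h, -finRotate_apply, -finRotate_symm_apply]
  right_inv := by
    intro x
    by_cases h : m / 2 ≤ (x.2 : ℕ) <;> simp [h, -finRotate_apply, -finRotate_symm_apply]

/-- `g_A = γ⁻¹ g_B γ`. -/
def gA (n m : ℕ) : Equiv.Perm (Fin n × Fin m) :=
  (gamma n m)⁻¹ * gB n m * gamma n m

/-- For even `m`, `Fin m` splits into an upper and a lower half. -/
def halfEquiv (m : ℕ) (hm : m % 2 = 0) : Fin 2 × Fin (m / 2) ≃ Fin m :=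
  finProdFinEquiv.trans (finCongr (by omega))

/-- `X`, the product of the `2n` disjoint `(m/2)`-cycles cyclically permuting the
upper and the lower half of each block `k`. -/
def Xel (n m : ℕ) (hm : m % 2 = 0) : Equiv.Perm (Fin n × Fin m) :=
  Equiv.prodCongr (Equiv.refl (Fin n))
    ((halfEquiv m hm).permCongr
      (Equiv.prodCongr (Equiv.refl (Fin 2)) (finRotate (m / 2))))

/-- The set of blocks of `P(X)`; it has `2n` elements. -/
abbrev BX (n m : ℕ) (hm : m % 2 = 0) := Quotient (orbitSetoid (Xel n m hm))

/-- `q_A = q_X(g_A) ∈ P_{2n}`. -/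
def qAel (n m : ℕ) (hm : m % 2 = 0) : Setoid (BX n m hm) :=
  qc (Xel n m hm) (gA n m)

/-- `q_B = q_X(g_B) ∈ P_{2n}`. -/
def qBel (n m : ℕ) (hm : m % 2 = 0) : Setoid (BX n m hm) :=
  qc (Xel n m hm) (gB n m)

/-! ## Doubled elements (two copies) -/

/-- Two copies of the index set `{1,…,mn}`. -/
abbrev DIdx (n m : ℕ) := (Fin n × Fin m) ⊕ (Fin n × Fin m)

/-- `g̃_A = g_A ⊕ g_A`. -/
def gAt (n m : ℕ) : Equiv.Perm (DIdx n m) := Equiv.sumCongr (gA n m) (gA n m)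

/-- `g̃_B = g_B ⊕ g_B`. -/
def gBt (n m : ℕ) : Equiv.Perm (DIdx n m) := Equiv.sumCongr (gB n m) (gB n m)

/-- `X̃ = X ⊕ X`. -/
def Xt (n m : ℕ) (hm : m % 2 = 0) : Equiv.Perm (DIdx n m) :=
  Equiv.sumCongr (Xel n m hm) (Xel n m hm)

/-- The set of blocks of `P(X̃)`; it has `4n` elements. -/
abbrev BXt (n m : ℕ) (hm : m % 2 = 0) := Quotient (orbitSetoid (Xt n m hm))

/-- `q̃_A = q_{X̃}(g̃_A) ∈ P_{4n}`. -/
def qAt (n m : ℕ) (hm : m % 2 = 0) : Setoid (BXt n m hm) :=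
  qc (Xt n m hm) (gAt n m)

/-- `q̃_B = q_{X̃}(g̃_B) ∈ P_{4n}`. -/
def qBt (n m : ℕ) (hm : m % 2 = 0) : Setoid (BXt n m hm) :=
  qc (Xt n m hm) (gBt n m)

/-- A block of `P(X̃)` lies in the first copy. -/
def inCopy1 {n m : ℕ} {hm : m % 2 = 0} (u : BXt n m hm) : Prop :=
  ∃ x, Quotient.mk (orbitSetoid (Xt n m hm)) (Sum.inl x) = u

/-- `#₁⁽¹⁾(q)`: the number of singlets of `q` among the first-copy positions. -/
def nS1 {n m : ℕ} {hm : m % 2 = 0} (q : Setoid (BXt n m hm)) : ℤ :=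
  Nat.card {u : BXt n m hm // IsSinglet q u ∧ inCopy1 u}

/-- `#₁⁽²⁾(q)`: the number of singlets of `q` among the second-copy positions. -/
def nS2 {n m : ℕ} {hm : m % 2 = 0} (q : Setoid (BXt n m hm)) : ℤ :=
  Nat.card {u : BXt n m hm // IsSinglet q u ∧ ¬ inCopy1 u}

/-- `τ ∈ P_{4n}`, the two-block partition separating the two copies. -/
def tau (n m : ℕ) (hm : m % 2 = 0) : Setoid (BXt n m hm) where
  r u v := inCopy1 u ↔ inCopy1 v
  iseqv := ⟨fun _ => Iff.rfl, Iff.symm, Iff.trans⟩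

/-! ## Graphs, cuts and optimization programs -/

variable {V : Type*}

/-- Sum of an edge function along (the edge list of) a walk, with multiplicity. -/
def wkSum {β : Type*} [AddCommMonoid β] {G : SimpleGraph V} {x y : V}
    (f : Sym2 V → β) (L : G.Walk x y) : β :=
  (L.edges.map f).sum

variable [Fintype V]

/-- Sum of an edge weight function over a set of edges. -/
def wsum (f : Sym2 V → ℝ) (S : Set (Sym2 V)) : ℝ :=
  ∑ e ∈ Finset.univ.filter (· ∈ S), f e

/-- The cut surface `μ(r)`: edges of `G` with one endpoint in `r`, the other outside. -/
def mu (G : SimpleGraph V) (r : Set V) : Set (Sym2 V) :=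
  {e | e ∈ G.edgeSet ∧ ∃ x y, e = s(x, y) ∧ x ∈ r ∧ y ∉ r}

/-- `μ(r₁:r₂)`: edges of `G` with an endpoint in `r₁` and an endpoint in `r₂`. -/
def mu2 (G : SimpleGraph V) (r₁ r₂ : Set V) : Set (Sym2 V) :=
  {e | e ∈ G.edgeSet ∧ ∃ x y, e = s(x, y) ∧ x ∈ r₁ ∧ y ∈ r₂}

/-- `r` is a cut for `X : Y`. -/
def IsCut (X Y r : Set V) : Prop := X ⊆ r ∧ Y ⊆ rᶜ

/-- The minimal cut area `𝒜(X:Y)`. -/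
def minCut (G : SimpleGraph V) (w : Sym2 V → ℝ) (X Y : Set V) : ℝ :=
  sInf {a | ∃ r : Set V, IsCut X Y r ∧ a = wsum w (mu G r)}

/-- `(α,β,γ)` is a triway cut for `(A,B,C)`. -/
def IsTriway (A B C α β γ : Set V) : Prop :=
  α ∪ β ∪ γ = Set.univ ∧ Disjoint α β ∧ Disjoint β γ ∧ Disjoint α γ ∧
    A ⊆ α ∧ B ⊆ β ∧ C ⊆ γ

/-- The area of a triway cut with tensions `(t_{A:B}, t_{B:C}, t_{C:A})`. -/
def triArea (G : SimpleGraph V) (w : Sym2 V → ℝ) (tAB tBC tCA : ℝ)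
    (α β γ : Set V) : ℝ :=
  tAB * wsum w (mu2 G α β) + tBC * wsum w (mu2 G β γ) + tCA * wsum w (mu2 G γ α)

/-- The minimal triway cut area `𝒜_t(A:B:C)`. -/
def triCut (G : SimpleGraph V) (w : Sym2 V → ℝ) (tAB tBC tCA : ℝ)
    (A B C : Set V) : ℝ :=
  sInf {a | ∃ α β γ : Set V, IsTriway A B C α β γ ∧ a = triArea G w tAB tBC tCA α β γ}

/-- Boundary data: `∂ = A ⊔ B ⊔ C` (pairwise disjoint). -/
def Bdy (A B C : Set V) : Prop := Disjoint A B ∧ Disjoint A C ∧ Disjoint B C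

/-! ### The permutation optimization `R` -/

/-- The symmetric edge function induced by the Cayley distance of a vertex
configuration of permutations. -/
def permE {ι : Type*} [Fintype ι] (g : V → Equiv.Perm ι) : Sym2 V → ℝ :=
  Sym2.lift ⟨fun x y => (cayley (g x) (g y) : ℝ),
    fun x y => congrArg Int.cast (cayley_comm (g x) (g y))⟩

/-- The free energy `R(g) = Σ_e w(e) d(g(x),g(y))`. -/
def Renergy {ι : Type*} [Fintype ι] (G : SimpleGraph V) (w : Sym2 V → ℝ)
    (g : V → Equiv.Perm ι) : ℝ :=
  wsum (fun e => w e * permE g e) G.edgeSet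

/-- The optimal value `R` of the permutation optimization. -/
def Rval {ι : Type*} [Fintype ι] (G : SimpleGraph V) (w : Sym2 V → ℝ)
    (A B C : Set V) (g₁ g₂ : Equiv.Perm ι) : ℝ :=
  sInf {a | ∃ g : V → Equiv.Perm ι,
    (∀ v ∈ A, g v = g₁) ∧ (∀ v ∈ B, g v = g₂) ∧ (∀ v ∈ C, g v = 1) ∧
    a = Renergy G w g}

/-! ### The set-partition optimization `Q` -/

/-- The symmetric integer edge function induced by the partition distance of a vertex
configuration of partitions. -/
def partEZ {κ : Type*} (q : V → Setoid κ) : Sym2 V → ℤ :=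
  Sym2.lift ⟨fun x y => pdist (q x) (q y), fun x y => pdist_comm (q x) (q y)⟩

/-- The free energy `Q(q) = Σ_e w(e) d(q(x),q(y))`. -/
def Qenergy {κ : Type*} (G : SimpleGraph V) (w : Sym2 V → ℝ)
    (q : V → Setoid κ) : ℝ :=
  wsum (fun e => w e * (partEZ q e : ℝ)) G.edgeSet

/-- The optimal value `Q` of the set-partition optimization. -/
def Qval {κ : Type*} (G : SimpleGraph V) (w : Sym2 V → ℝ)
    (A B C : Set V) (q₁ q₂ : Setoid κ) : ℝ :=
  sInf {a | ∃ q : V → Setoid κ,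
    (∀ v ∈ A, q v = q₁) ∧ (∀ v ∈ B, q v = q₂) ∧ (∀ v ∈ C, q v = ⊥) ∧
    a = Qenergy G w q}

/-! ### The Boolean optimization `B` -/

/-- The Hamming distance between two bit strings. -/
def ham {κ : Type*} [Fintype κ] (b₁ b₂ : κ → Bool) : ℤ :=
  ∑ k : κ, if b₁ k = b₂ k then 0 else 1

/-- The bit string `b(q)` of a partition: `false` exactly at singlets. -/
def bvec {κ : Type*} (p : Setoid κ) : κ → Bool :=
  fun u => if IsSinglet p u then false else true

/-- Feasibility of `r` for the Boolean program at configuration `b`. -/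
def Bfeas {κ : Type*} [Fintype κ] (G : SimpleGraph V) (A B : Set V) (n : ℕ)
    (b : V → κ → Bool) (r : Sym2 V → ℕ) : Prop :=
  (∀ x ∈ A, ∀ y ∈ B, ∀ L : G.Walk x y,
    2 ∣ wkSum (fun e => (r e : ℤ)) L ∧
    wkSum (fun e => (r e : ℤ)) L ≥
      2 * ((n : ℤ) - if ∀ v ∈ L.support, ∀ k, b v k = true then 1 else 0)) ∧
  (∀ x y : V, G.Adj x y → (r s(x, y) : ℤ) ≥ ⌈(ham (b x) (b y) : ℚ) / 2⌉)

/-- The inner Boolean optimum `B(b)` at a fixed Boolean configuration `b`. -/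
def BvalAt {κ : Type*} [Fintype κ] (G : SimpleGraph V) (w : Sym2 V → ℝ)
    (A B : Set V) (n : ℕ) (b : V → κ → Bool) : ℝ :=
  sInf {a | ∃ r : Sym2 V → ℕ, Bfeas G A B n b r ∧
    a = wsum (fun e => w e * (r e : ℝ)) G.edgeSet}

/-- The optimal value `B` of the Boolean optimization. -/
def Bval (κ : Type*) [Fintype κ] (G : SimpleGraph V) (w : Sym2 V → ℝ)
    (A B C : Set V) (n : ℕ) : ℝ :=
  sInf {a | ∃ b : V → κ → Bool,
    (∀ v ∈ A ∪ B, ∀ k, b v k = true) ∧ (∀ v ∈ C, ∀ k, b v k = false) ∧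
    ∃ r : Sym2 V → ℕ, Bfeas G A B n b r ∧
      a = wsum (fun e => w e * (r e : ℝ)) G.edgeSet}

/-! ### The integer program `I` -/

/-- Feasibility of `(ρ,σ)` for the integer program. -/
def IPfeas (G : SimpleGraph V) (A B C : Set V) (n : ℕ) (ρ σ : Sym2 V → ℕ) : Prop :=
  (∀ x ∈ A, ∀ y ∈ B, ∀ L : G.Walk x y,
    2 ∣ wkSum (fun e => (σ e : ℤ) + (ρ e : ℤ)) L ∧
    wkSum (fun e => (σ e : ℤ) + (ρ e : ℤ)) L ≥
      2 * ((n : ℤ) - if wkSum (fun e => (ρ e : ℤ)) L = 0 then 1 else 0)) ∧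
  (∀ x ∈ A ∪ B, ∀ y ∈ C, ∀ L : G.Walk x y,
    wkSum (fun e => (ρ e : ℤ)) L ≥ (n : ℤ))

/-- The objective of the integer program. -/
def IPobj (G : SimpleGraph V) (w : Sym2 V → ℝ) (ρ σ : Sym2 V → ℕ) : ℝ :=
  wsum (fun e => w e * ((σ e : ℝ) + (ρ e : ℝ))) G.edgeSet

/-- The optimal value `I` of the integer program. -/
def Ival (G : SimpleGraph V) (w : Sym2 V → ℝ) (A B C : Set V) (n : ℕ) : ℝ :=
  sInf {a | ∃ ρ σ : Sym2 V → ℕ, IPfeas G A B C n ρ σ ∧ a = IPobj G w ρ σ}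

/-! ### The ℓ-intersecting cut problem `M` -/

/-- Feasibility for the `ℓ`-intersecting cut problem with boundary sets
`Γ₀, …, Γ_ℓ` and `C`, for a half-integer valued `ϱ`. -/
def Mfeas (G : SimpleGraph V) (Γ : ℕ → Set V) (ℓ : ℕ) (C : Set V)
    (ϱ : Sym2 V → ℚ) : Prop :=
  (∀ e, ∃ j : ℕ, ϱ e = (j : ℚ) / 2) ∧
  (∀ k k' : ℕ, k ≤ ℓ → k' ≤ ℓ → ∀ x ∈ Γ k, ∀ y ∈ Γ k', ∀ L : G.Walk x y,
    ∃ j : ℕ, wkSum ϱ L = |(k : ℚ) - (k' : ℚ)| + (j : ℚ)) ∧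
  (∀ k : ℕ, k ≤ ℓ → ∀ x ∈ Γ k, ∀ y ∈ C, ∀ L : G.Walk x y,
    ∃ j : ℕ, wkSum ϱ L = (ℓ : ℚ) / 2 + (j : ℚ))

/-- The objective of the `ℓ`-intersecting cut problem. -/
def Mobj (G : SimpleGraph V) (w : Sym2 V → ℝ) (ϱ : Sym2 V → ℚ) : ℝ :=
  wsum (fun e => w e * (ϱ e : ℝ)) G.edgeSet

/-- The optimal value `M` of the `ℓ`-intersecting cut problem. -/
def Mval (G : SimpleGraph V) (w : Sym2 V → ℝ) (Γ : ℕ → Set V) (ℓ : ℕ)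
    (C : Set V) : ℝ :=
  sInf {a | ∃ ϱ : Sym2 V → ℚ, Mfeas G Γ ℓ C ϱ ∧ a = Mobj G w ϱ}

/-- The complementary reduced graph `G^c`: the edges of `G` not lying entirely
inside `V'`. -/
def reducedGraph (G : SimpleGraph V) (V' : Set V) : SimpleGraph V where
  Adj x y := G.Adj x y ∧ ¬ (x ∈ V' ∧ y ∈ V')
  symm := by
    refine ⟨?_⟩
    intro x y h
    exact ⟨h.1.symm, fun hc => h.2 ⟨hc.2, hc.1⟩⟩
  loopless := by
    refine ⟨?_⟩
    intro x h
    exact G.loopless.irrefl x h.1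

end RTN

/-!
Along a path from `A` to `B`, the triangle inequality for the partition distance gives
`Σ d(q(x), q(y)) ≥ d(q_A, q_B) = 2n - 2`: both `q_A` and `q_B` have `n` blocks, and their join
has one block because, on the `2n` blocks of `P(X)`, the `q_B`-links `(k,0)-(k,1)` and the
`q_A`-links `(k,1)-(k+1,0)` alternate around a single cycle. If some `p = q(v)` on the path has a
singlet `u`, splitting the path at `v` leaves `d(q_A, p) + d(p, q_B) ≥ 2n` to show, i.e.
`#(p ⊔ q_A) + #(p ⊔ q_B) ≤ #p`. Both this and the triangle inequality come from submodularity
`#a + #b ≤ #q + #(a ⊔ b)` for `q ≤ a, b`: apply it above `p` after splitting `u` off `q_A` and off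
`q_B`; each split costs one block, while the cycle with `u` removed is still connected, so the
join has at most two blocks. Evenness holds because `d(p, q) ≡ #p + #q` mod 2.
-/

namespace RTN

section Partitions

variable {α : Type*}

lemma nb_le_of_le [Finite α] {s t : Setoid α} (h : s ≤ t) : nb t ≤ nb s := by
  unfold nb
  exact_mod_cast Nat.card_le_card_of_surjective (Quotient.map' id h)
    (Quotient.ind fun x => ⟨Quotient.mk s x, rfl⟩)

lemma nb_eq_card_of_rel_iff {β : Type*} {s : Setoid α} {f : α → β}
    (hf : Function.Surjective f) (h : ∀ x y, s x y ↔ f x = f y) : nb s = Nat.card β := by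
  obtain rfl : s = Setoid.ker f := Setoid.ext fun x y => (h x y).trans Setoid.ker_def.symm
  exact congrArg _ (Nat.card_congr (Setoid.quotientKerEquivOfSurjective f hf))

lemma nb_le_one_of_rel [Finite α] {s : Setoid α} (h : ∀ x y, s x y) : nb s ≤ 1 := by
  have : Subsingleton (Quotient s) := ⟨Quotient.ind₂ fun x y => Quotient.sound (h x y)⟩
  unfold nb
  exact_mod_cast Finite.card_le_one_iff_subsingleton.mpr this

lemma nb_le_two_of_rel [Finite α] {s : Setoid α} {u v : α} (hv : v ≠ u)
    (h : ∀ x y, x ≠ u → y ≠ u → s x y) : nb s ≤ 2 := by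
  have hsurj : Function.Surjective fun b : Bool => if b then ⟦u⟧ else (⟦v⟧ : Quotient s) := by
    refine Quotient.ind fun x => ?_
    by_cases hx : x = u
    · exact ⟨true, by simp [hx]⟩
    · exact ⟨false, Quotient.sound (h v x hv hx)⟩
  unfold nb
  exact_mod_cast (Nat.card_le_card_of_surjective _ hsurj).trans_eq (by simp)

def merge (s : Setoid α) (x y : α) : Setoid α where
  r u v := s u v ∨ (s u x ∧ s y v) ∨ (s u y ∧ s x v)
  iseqv := by
    refine ⟨fun u => Or.inl (s.refl u), ?_, ?_⟩
    · rintro u v (h | ⟨h1, h2⟩ | ⟨h1, h2⟩)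
      · exact Or.inl (s.symm h)
      · exact Or.inr (Or.inr ⟨s.symm h2, s.symm h1⟩)
      · exact Or.inr (Or.inl ⟨s.symm h2, s.symm h1⟩)
    · rintro u v w (h | ⟨h1, h2⟩ | ⟨h1, h2⟩) (h' | ⟨h1', h2'⟩ | ⟨h1', h2'⟩)
      · exact Or.inl (s.trans h h')
      · exact Or.inr (Or.inl ⟨s.trans h h1', h2'⟩)
      · exact Or.inr (Or.inr ⟨s.trans h h1', h2'⟩)
      · exact Or.inr (Or.inl ⟨h1, s.trans h2 h'⟩)
      · exact Or.inl (s.trans (s.trans h1 (s.symm h1')) (s.trans (s.symm h2) h2'))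
      · exact Or.inl (s.trans h1 h2')
      · exact Or.inr (Or.inr ⟨h1, s.trans h2 h'⟩)
      · exact Or.inl (s.trans h1 h2')
      · exact Or.inr (Or.inr ⟨h1, h2'⟩)

lemma le_merge (s : Setoid α) (x y : α) : s ≤ merge s x y := fun _ _ h => Or.inl h

lemma merge_le {s t : Setoid α} {x y : α} (hst : s ≤ t) (hxy : t x y) : merge s x y ≤ t := by
  rintro u v (h | ⟨h1, h2⟩ | ⟨h1, h2⟩)
  · exact hst h
  · exact t.trans (hst h1) (t.trans hxy (hst h2))
  · exact t.trans (hst h1) (t.trans (t.symm hxy) (hst h2))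

lemma merge_rel (s : Setoid α) (x y : α) : merge s x y x y :=
  Or.inr (Or.inl ⟨s.refl x, s.refl y⟩)

lemma nb_merge [Finite α] {s : Setoid α} {x y : α} (hxy : ¬ s x y) :
    nb (merge s x y) = nb s - 1 := by
  let φ : {c : Quotient s // c ≠ ⟦y⟧} → Quotient (merge s x y) :=
    fun c => Quotient.map' id (le_merge s x y) c.1
  have hφ : Function.Bijective φ := by
    constructor
    · rintro ⟨c, hc⟩ ⟨d, hd⟩ h
      induction c using Quotient.ind
      induction d using Quotient.ind
      rcases Quotient.exact h with h | ⟨-, h⟩ | ⟨h, -⟩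
      · exact Subtype.ext (Quotient.sound h)
      · exact absurd (Quotient.sound (s.symm h)) hd
      · exact absurd (Quotient.sound h) hc
    · refine Quotient.ind fun u => ?_
      by_cases hu : s u y
      · refine ⟨⟨⟦x⟧, fun h => hxy (Quotient.exact h)⟩, Quotient.sound ?_⟩
        exact Or.inr (Or.inl ⟨s.refl x, s.symm hu⟩)
      · exact ⟨⟨⟦u⟧, fun h => hu (Quotient.exact h)⟩, rfl⟩
  have hcard := Nat.card_congr (Equiv.optionSubtypeNe (⟦y⟧ : Quotient s))
  rw [Finite.card_option] at hcard
  unfold nb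
  rw [← Nat.card_congr (Equiv.ofBijective φ hφ)]
  omega

lemma sub_one_le_nb_merge [Finite α] (s : Setoid α) (x y : α) :
    nb s - 1 ≤ nb (merge s x y) := by
  by_cases hxy : s x y
  · rw [le_antisymm (merge_le le_rfl hxy) (le_merge s x y)]
    omega
  · rw [nb_merge hxy]

lemma nb_add_nb_le_nb_add_nb_sup [Finite α] {q a b : Setoid α} (hqa : q ≤ a) (hqb : q ≤ b) :
    nb a + nb b ≤ nb q + nb (a ⊔ b) := by
  induction hN : Nat.card (Quotient q) using Nat.strong_induction_on generalizing q a with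
  | _ N ih =>
  by_cases hbq : b ≤ q
  · rw [le_antisymm hbq hqb, sup_eq_left.mpr hqa, add_comm]
  obtain ⟨x, y, hb, hq⟩ : ∃ x y, b x y ∧ ¬ q x y := by
    by_contra! h
    exact hbq fun x y => h x y
  have hdrop := nb_merge hq
  have hsup : merge a x y ⊔ b = a ⊔ b :=
    le_antisymm (sup_le (merge_le le_sup_left (le_sup_right (α := Setoid α) hb)) le_sup_right)
      (sup_le_sup_right (le_merge a x y) b)
  have hIH := ih _ (by unfold nb at hdrop; omega) (q := merge q x y) (a := merge a x y)
    (merge_le (hqa.trans (le_merge a x y)) (merge_rel a x y)) (merge_le hqb hb) rfl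
  have := sub_one_le_nb_merge a x y
  rw [hsup] at hIH
  omega

lemma pdist_self (p : Setoid α) : pdist p p = 0 := by
  rw [pdist, sup_idem]; ring

lemma pdist_triangle [Finite α] (p q r : Setoid α) : pdist p r ≤ pdist p q + pdist q r := by
  have hsub := nb_add_nb_le_nb_add_nb_sup (le_sup_right : q ≤ p ⊔ q) (le_sup_left : q ≤ q ⊔ r)
  have hmono : nb (p ⊔ q ⊔ (q ⊔ r)) ≤ nb (p ⊔ r) :=
    nb_le_of_le (sup_le_sup le_sup_left le_sup_right)
  unfold pdist
  omega

def isolate (s : Setoid α) (u : α) : Setoid α where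
  r x y := x = y ∨ (x ≠ u ∧ y ≠ u ∧ s x y)
  iseqv := by
    refine ⟨fun x => Or.inl rfl, ?_, ?_⟩
    · rintro x y (rfl | ⟨hx, hy, h⟩)
      · exact Or.inl rfl
      · exact Or.inr ⟨hy, hx, s.symm h⟩
    · rintro x y z (rfl | ⟨hx, hy, h⟩) h'
      · exact h'
      · rcases h' with rfl | ⟨-, hz, h'⟩
        · exact Or.inr ⟨hx, hy, h⟩
        · exact Or.inr ⟨hx, hz, s.trans h h'⟩

lemma isolate_le (s : Setoid α) (u : α) : isolate s u ≤ s := by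
  rintro x y (rfl | ⟨-, -, h⟩)
  · exact s.refl x
  · exact h

lemma isolate_rel {s : Setoid α} {u x y : α} (hx : x ≠ u) (hy : y ≠ u) (h : s x y) :
    isolate s u x y :=
  Or.inr ⟨hx, hy, h⟩

lemma isSinglet_iff_le_isolate_top {s : Setoid α} {u : α} :
    IsSinglet s u ↔ s ≤ isolate ⊤ u := by
  constructor
  · intro hs x y h
    by_cases hx : x = u
    · subst hx; exact Or.inl (hs y h).symm
    by_cases hy : y = u
    · subst hy; exact Or.inl (hs x (s.symm h))
    exact Or.inr ⟨hx, hy, trivial⟩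
  · intro hs y h
    rcases hs h with rfl | ⟨hu, -, -⟩
    · rfl
    · exact absurd rfl hu

lemma isSinglet_isolate (s : Setoid α) (u : α) : IsSinglet (isolate s u) u := by
  rintro y (rfl | ⟨hu, -, -⟩)
  · rfl
  · exact absurd rfl hu

lemma IsSinglet.sup {s t : Setoid α} {u : α} (hs : IsSinglet s u) (ht : IsSinglet t u) :
    IsSinglet (s ⊔ t) u := by
  rw [isSinglet_iff_le_isolate_top] at *
  exact sup_le hs ht

variable [Finite α] {p a b : Setoid α} {u : α}

lemma nb_sup_le_nb_sup_isolate_sub_one (hp : IsSinglet p u) {v : α} (ha : a u v) (hv : v ≠ u) :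
    nb (p ⊔ a) ≤ nb (p ⊔ isolate a u) - 1 := by
  have hsing : IsSinglet (p ⊔ isolate a u) u := hp.sup (isSinglet_isolate a u)
  rw [← nb_merge (x := u) (y := v) fun h => hv (hsing v h)]
  exact nb_le_of_le <| merge_le (sup_le_sup_left (isolate_le a u) p)
    (le_sup_right (α := Setoid α) ha)

lemma nb_sup_add_nb_sup_le_of_isSinglet (hp : IsSinglet p u) {va vb : α} (ha : a u va)
    (hva : va ≠ u) (hb : b u vb) (hvb : vb ≠ u)
    (hab : ∀ x y, x ≠ u → y ≠ u → (isolate a u ⊔ isolate b u) x y) :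
    nb (p ⊔ a) + nb (p ⊔ b) ≤ nb p := by
  have hsub := nb_add_nb_le_nb_add_nb_sup (le_sup_left : p ≤ p ⊔ isolate a u)
    (le_sup_left : p ≤ p ⊔ isolate b u)
  have hle : isolate a u ⊔ isolate b u ≤ (p ⊔ isolate a u) ⊔ (p ⊔ isolate b u) :=
    sup_le_sup le_sup_right le_sup_right
  have htwo := nb_le_two_of_rel hva fun x y hx hy => hle (hab x y hx hy)
  have hA := nb_sup_le_nb_sup_isolate_sub_one hp ha hva
  have hB := nb_sup_le_nb_sup_isolate_sub_one hp hb hvb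
  omega

end Partitions

section Cycles

open Equiv Equiv.Perm

variable {α β : Type*}

lemma sameCycle_map_of_semiconj [Finite α] {σ : Perm α} {τ : Perm β} {f : α → β}
    (h : Function.Semiconj f σ τ) {x y : α} (hxy : σ.SameCycle x y) :
    τ.SameCycle (f x) (f y) := by
  obtain ⟨k, rfl⟩ := hxy.exists_nat_pow_eq
  exact ⟨k, by simp only [zpow_natCast, coe_pow, (h.iterate_right k).eq]⟩

lemma sameCycle_finRotate {N : ℕ} (x y : Fin N) : (finRotate N).SameCycle x y := by
  match N, x, y with
  | 1, x, y => exact (Subsingleton.elim x y).sameCycle _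
  | N + 2, x, y =>
    exact isCycle_finRotate.sameCycle (mem_support.mp (by simp [support_finRotate]))
      (mem_support.mp (by simp [support_finRotate]))

lemma val_finRotate {N : ℕ} (i : Fin N) : (finRotate N i : ℕ) = (i + 1) % N := by
  have : NeZero N := ⟨by have := i.pos; omega⟩
  simp [finRotate_apply, Fin.val_add]

lemma sameCycle_permCongr_iff [Finite α] (e : α ≃ β) (g : Perm α) {x y : β} :
    (e.permCongr g).SameCycle x y ↔ g.SameCycle (e.symm x) (e.symm y) := by
  have : Finite β := .of_equiv α e
  constructor
  · exact sameCycle_map_of_semiconj fun z => by simp [permCongr_apply]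
  · intro h
    simpa using sameCycle_map_of_semiconj (f := e) (τ := e.permCongr g)
      (fun z => by simp [permCongr_apply]) h

lemma sameCycle_prodCongr_refl_iff [Finite α] [Finite β] (g : Perm β) {x y : α × β} :
    Perm.SameCycle (prodCongr (Equiv.refl α) g) x y ↔ x.1 = y.1 ∧ g.SameCycle x.2 y.2 := by
  constructor
  · intro h
    exact ⟨sameCycle_one.mp (sameCycle_map_of_semiconj (f := Prod.fst) (τ := 1)
      (fun _ => rfl) h), sameCycle_map_of_semiconj (f := Prod.snd) (τ := g) (fun _ => rfl) h⟩
  · obtain ⟨x1, x2⟩ := x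
    obtain ⟨y1, y2⟩ := y
    rintro ⟨rfl, h2⟩
    exact sameCycle_map_of_semiconj (f := fun b => (x1, b)) (τ := prodCongr (Equiv.refl α) g)
      (fun _ => rfl) h2

lemma rel_of_forall_sameCycle [Finite α] {σ : Perm α} (hσ : ∀ x y, σ.SameCycle x y)
    {s : Setoid α} {u : α} (hs : ∀ x, x ≠ u → σ x ≠ u → s x (σ x)) {x y : α}
    (hx : x ≠ u) (hy : y ≠ u) : s x y := by
  classical
  suffices h : ∀ y, y ≠ u → s (σ u) y from s.trans (s.symm (h x hx)) (h y hy)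
  intro y hy
  obtain ⟨k, hk, hmin⟩ : ∃ k : ℕ, (σ ^ k) (σ u) = y ∧ ∀ j < k, (σ ^ j) (σ u) ≠ y :=
    have hex := (hσ (σ u) y).exists_nat_pow_eq
    ⟨Nat.find hex, Nat.find_spec hex, fun _ => Nat.find_min hex⟩
  -- the orbit of `σ u` reaches `y` before it returns to `u`
  have hne : ∀ j ≤ k, (σ ^ j) (σ u) ≠ u := by
    intro j hj hju
    have hjk : j + 1 ≤ k := lt_of_le_of_ne hj fun hjk => hy (by rw [← hk, ← hjk, hju])
    have hfix : (σ ^ (j + 1)) (σ u) = σ u := by rw [pow_succ', mul_apply, hju]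
    refine hmin (k - (j + 1)) (by omega) ?_
    rw [← hfix, ← mul_apply, ← pow_add, Nat.sub_add_cancel hjk, hk]
  have hchain : ∀ j ≤ k, s (σ u) ((σ ^ j) (σ u)) := by
    intro j hj
    induction j with
    | zero => exact s.refl _
    | succ j ih =>
      rw [pow_succ', mul_apply]
      exact s.trans (ih (by omega)) (hs _ (hne j (by omega)) (by
        rw [← mul_apply, ← pow_succ']; exact hne _ hj))
  exact hk ▸ hchain k le_rfl

end Cycles

section Walks

variable {V κ : Type*} {G : SimpleGraph V} {x y : V}

lemma wkSum_cons {β : Type*} [AddCommMonoid β] (f : Sym2 V → β) {z : V} (h : G.Adj x z)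
    (L : G.Walk z y) : wkSum f (.cons h L) = f s(x, z) + wkSum f L := by
  simp [wkSum]

lemma wkSum_eq_add_of_mem_support {β : Type*} [AddCommMonoid β] [DecidableEq V]
    (f : Sym2 V → β) (L : G.Walk x y) {v : V} (hv : v ∈ L.support) :
    wkSum f L = wkSum f (L.takeUntil v hv) + wkSum f (L.dropUntil v hv) := by
  have h := congrArg SimpleGraph.Walk.edges (L.take_spec hv)
  rw [SimpleGraph.Walk.edges_append] at h
  rw [wkSum, wkSum, wkSum, ← h, List.map_append, List.sum_append]

lemma pdist_le_wkSum [Finite κ] (q : V → Setoid κ) (L : G.Walk x y) :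
    pdist (q x) (q y) ≤ wkSum (partEZ q) L := by
  induction L with
  | nil => simp [wkSum, pdist_self]
  | @cons a b c h L ih =>
    rw [wkSum_cons]
    exact (pdist_triangle (q a) (q b) (q c)).trans (add_le_add le_rfl ih)

lemma two_dvd_wkSum_sub (q : V → Setoid κ) (L : G.Walk x y) :
    2 ∣ wkSum (partEZ q) L - nb (q x) - nb (q y) := by
  induction L with
  | nil =>
    simp only [wkSum, SimpleGraph.Walk.edges_nil, List.map_nil, List.sum_nil]
    omega
  | @cons a b c h L ih =>
    have hab : partEZ q s(a, b) = nb (q a) + nb (q b) - 2 * nb (q a ⊔ q b) := rfl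
    rw [wkSum_cons, hab]
    omega

end Walks

lemma qc_mk_iff {α : Type*} {g₀ g : Equiv.Perm α} (hle : orbitSetoid g₀ ≤ orbitSetoid g)
    (x y : α) : qc g₀ g ⟦x⟧ ⟦y⟧ ↔ g.SameCycle x y := by
  have hsup : orbitSetoid g ⊔ orbitSetoid g₀ = orbitSetoid g := sup_eq_left.mpr hle
  constructor
  · rintro ⟨x', y', hx, hy, h⟩
    rw [hsup] at h
    exact (orbitSetoid g).trans ((orbitSetoid g).symm (hle (Quotient.exact hx)))
      ((orbitSetoid g).trans h (hle (Quotient.exact hy)))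
  · intro h
    exact ⟨x, y, rfl, rfl, by rw [hsup]; exact h⟩

section StandardElements

open Equiv Equiv.Perm

variable {n m : ℕ} (hm : m % 2 = 0) (hm2 : 2 ≤ m)

/-- Labels the block of `P(X)` containing `(k, ℓ)` by `k` and the half of `ℓ`. -/
def blockIndex (x : Fin n × Fin m) : Fin n × Fin 2 := (x.1, ((halfEquiv m hm).symm x.2).1)

/-- The cycle of `g_A` through the block `(k, h)`: `γ` shifts `k` on the upper half. -/
def cycleIndexA (a : Fin n × Fin 2) : Fin n := if a.2 = 1 then finRotate n a.1 else a.1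

lemma halfEquiv_symm_fst_eq_one_iff (ℓ : Fin m) :
    ((halfEquiv m hm).symm ℓ).1 = 1 ↔ m / 2 ≤ (ℓ : ℕ) := by
  have hpos : 0 < m / 2 := by have := ℓ.pos; omega
  have hval : (((halfEquiv m hm).symm ℓ).1 : ℕ) = ℓ / (m / 2) := by
    simp [halfEquiv]
  rw [Fin.ext_iff, hval, Fin.val_one, Nat.div_eq_iff hpos]
  omega

lemma sameCycle_Xel_iff {x y : Fin n × Fin m} :
    (Xel n m hm).SameCycle x y ↔ blockIndex hm x = blockIndex hm y := by
  rw [Xel, sameCycle_prodCongr_refl_iff, sameCycle_permCongr_iff,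
    sameCycle_prodCongr_refl_iff, blockIndex, blockIndex, Prod.mk.injEq]
  simp [sameCycle_finRotate]

lemma sameCycle_gB_iff {x y : Fin n × Fin m} : (gB n m).SameCycle x y ↔ x.1 = y.1 := by
  simp [gB, sameCycle_prodCongr_refl_iff, sameCycle_finRotate]

lemma gamma_fst (x : Fin n × Fin m) :
    (gamma n m x).1 = cycleIndexA (blockIndex hm x) := by
  simp only [gamma, coe_fn_mk, cycleIndexA, blockIndex, halfEquiv_symm_fst_eq_one_iff]
  split_ifs <;> rfl

lemma sameCycle_gA_iff {x y : Fin n × Fin m} :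
    (gA n m).SameCycle x y ↔ cycleIndexA (blockIndex hm x) = cycleIndexA (blockIndex hm y) := by
  have hconj := sameCycle_conj (g := (gamma n m)⁻¹) (f := gB n m) (x := x) (y := y)
  rw [inv_inv] at hconj
  rw [gA, hconj, sameCycle_gB_iff, gamma_fst, gamma_fst]

include hm2 in
lemma blockIndex_surjective : Function.Surjective (blockIndex (n := n) hm) := fun a =>
  ⟨(a.1, halfEquiv m hm (a.2, ⟨0, by omega⟩)), by simp [blockIndex]⟩

def blockEquiv : BX n m hm ≃ Fin n × Fin 2 :=
  (Quotient.congrRight fun _ _ => (sameCycle_Xel_iff hm).trans Setoid.ker_def.symm).trans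
    (Setoid.quotientKerEquivOfSurjective _ (blockIndex_surjective hm hm2))

lemma blockEquiv_mk (x : Fin n × Fin m) : blockEquiv hm hm2 ⟦x⟧ = blockIndex hm x := rfl

lemma qBel_iff (u v : BX n m hm) :
    qBel n m hm u v ↔ (blockEquiv hm hm2 u).1 = (blockEquiv hm hm2 v).1 := by
  induction u using Quotient.ind
  induction v using Quotient.ind
  have hle : orbitSetoid (Xel n m hm) ≤ orbitSetoid (gB n m) := fun _ _ h =>
    sameCycle_gB_iff.mpr (congrArg Prod.fst ((sameCycle_Xel_iff hm).mp h) :)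
  rw [qBel, qc_mk_iff hle, sameCycle_gB_iff, blockEquiv_mk, blockEquiv_mk]
  rfl

lemma qAel_iff (u v : BX n m hm) :
    qAel n m hm u v ↔
      cycleIndexA (blockEquiv hm hm2 u) = cycleIndexA (blockEquiv hm hm2 v) := by
  induction u using Quotient.ind
  induction v using Quotient.ind
  have hle : orbitSetoid (Xel n m hm) ≤ orbitSetoid (gA n m) := fun _ _ h =>
    (sameCycle_gA_iff hm).mpr (congrArg cycleIndexA ((sameCycle_Xel_iff hm).mp h))
  rw [qAel, qc_mk_iff hle, sameCycle_gA_iff hm, blockEquiv_mk, blockEquiv_mk]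

include hm2 in
lemma nb_qBel : nb (qBel n m hm) = n := by
  rw [nb_eq_card_of_rel_iff (f := fun u => (blockEquiv hm hm2 u).1)
    (fun k => ⟨(blockEquiv hm hm2).symm (k, 0), by simp⟩) (qBel_iff hm hm2), Nat.card_fin]

include hm2 in
lemma nb_qAel : nb (qAel n m hm) = n := by
  rw [nb_eq_card_of_rel_iff (f := fun u => cycleIndexA (blockEquiv hm hm2 u))
    (fun k => ⟨(blockEquiv hm hm2).symm (k, 0), by simp [cycleIndexA]⟩) (qAel_iff hm hm2),
    Nat.card_fin]

include hm2 in
lemma exists_ne_qBel (u : BX n m hm) : ∃ v, v ≠ u ∧ qBel n m hm u v := by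
  obtain ⟨⟨k, h⟩, rfl⟩ := (blockEquiv hm hm2).symm.surjective u
  refine ⟨(blockEquiv hm hm2).symm (k, 1 - h), ?_, by simp [qBel_iff hm hm2]⟩
  refine (blockEquiv hm hm2).symm.injective.ne ?_
  simp only [ne_eq, Prod.mk.injEq, true_and]
  omega

include hm2 in
lemma exists_ne_qAel (u : BX n m hm) : ∃ v, v ≠ u ∧ qAel n m hm u v := by
  obtain ⟨⟨k, h⟩, rfl⟩ := (blockEquiv hm hm2).symm.surjective u
  obtain rfl | rfl : h = 0 ∨ h = 1 := by omega
  · refine ⟨(blockEquiv hm hm2).symm ((finRotate n).symm k, 1),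
      (blockEquiv hm hm2).symm.injective.ne (by simp), ?_⟩
    simp [qAel_iff hm hm2, cycleIndexA, -finRotate_apply, -finRotate_symm_apply]
  · refine ⟨(blockEquiv hm hm2).symm (finRotate n k, 0),
      (blockEquiv hm hm2).symm.injective.ne (by simp), ?_⟩
    simp [qAel_iff hm hm2, cycleIndexA]

/-- Running through `Fin (2n)` in order visits the blocks `(0,0), (0,1), (1,0), (1,1), …`. -/
def cycleEquiv : Fin (n * 2) ≃ BX n m hm := finProdFinEquiv.symm.trans (blockEquiv hm hm2).symm

lemma qAel_or_qBel_cycleEquiv (t : Fin (n * 2)) :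
    qAel n m hm (cycleEquiv hm hm2 t) (cycleEquiv hm hm2 (finRotate _ t)) ∨
      qBel n m hm (cycleEquiv hm hm2 t) (cycleEquiv hm hm2 (finRotate _ t)) := by
  simp only [qAel_iff hm hm2, qBel_iff hm hm2, cycleEquiv, trans_apply, apply_symm_apply,
    finProdFinEquiv_symm_apply, cycleIndexA, Fin.ext_iff, Fin.coe_divNat, Fin.coe_modNat,
    val_finRotate, Fin.val_one]
  have ht := t.isLt
  rcases Nat.mod_two_eq_zero_or_one t with h | h
  · right
    rw [Nat.mod_eq_of_lt (by omega : (t : ℕ) + 1 < n * 2)]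
    omega
  · left
    rw [if_pos h]
    rcases (by omega : (t : ℕ) + 1 < n * 2 ∨ (t : ℕ) + 1 = n * 2) with hlt | heq
    · rw [Nat.mod_eq_of_lt hlt, if_neg (by omega)]
      simp only [val_finRotate, Fin.coe_divNat, Nat.mod_eq_of_lt hlt]
      rw [Nat.mod_eq_of_lt (by omega)]
      omega
    · rw [heq, Nat.mod_self, if_neg (by omega)]
      simp only [val_finRotate, Fin.coe_divNat, heq, Nat.mod_self]
      rw [show (t : ℕ) / 2 + 1 = n by omega, Nat.mod_self]

include hm2 in
/-- `q_B`- and `q_A`-links alternate around the `2n`-cycle `cycleEquiv`, so removing one block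
leaves a path through all the others. -/
lemma isolate_qAel_sup_isolate_qBel_rel (u : BX n m hm) {x y : BX n m hm} (hx : x ≠ u)
    (hy : y ≠ u) : (isolate (qAel n m hm) u ⊔ isolate (qBel n m hm) u) x y := by
  let c := cycleEquiv (n := n) hm hm2
  refine rel_of_forall_sameCycle (σ := c.permCongr (finRotate _))
    (fun _ _ => (sameCycle_permCongr_iff _ _).mpr (sameCycle_finRotate _ _)) (fun z hz hσz => ?_)
    hx hy
  have hstep := qAel_or_qBel_cycleEquiv hm hm2 (c.symm z)
  rw [apply_symm_apply] at hstep
  rcases hstep with h | h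
  · exact le_sup_left (α := Setoid _) (isolate_rel hz hσz h)
  · exact le_sup_right (α := Setoid _) (isolate_rel hz hσz h)

include hm2 in
lemma qAel_sup_qBel_rel (x y : BX n m hm) : (qAel n m hm ⊔ qBel n m hm) x y := by
  by_cases hyx : y = x
  · rw [hyx]
  obtain ⟨v, hvx, hxv⟩ := exists_ne_qAel hm hm2 x
  refine (qAel n m hm ⊔ qBel n m hm).trans (le_sup_left (α := Setoid _) hxv) ?_
  exact sup_le_sup (isolate_le _ x) (isolate_le _ x)
    (isolate_qAel_sup_isolate_qBel_rel hm hm2 x hvx hyx)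

include hm2 in
lemma two_mul_sub_two_le_pdist_qAel_qBel :
    2 * (n : ℤ) - 2 ≤ pdist (qAel n m hm) (qBel n m hm) := by
  have := nb_le_one_of_rel (qAel_sup_qBel_rel (n := n) hm hm2)
  rw [pdist, nb_qAel hm hm2, nb_qBel hm hm2]
  omega

include hm2 in
lemma two_mul_le_pdist_add_pdist_of_isSinglet {p : Setoid (BX n m hm)} {u : BX n m hm}
    (hp : IsSinglet p u) : 2 * (n : ℤ) ≤ pdist (qAel n m hm) p + pdist p (qBel n m hm) := by
  obtain ⟨va, hva, hua⟩ := exists_ne_qAel hm hm2 u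
  obtain ⟨vb, hvb, hub⟩ := exists_ne_qBel hm hm2 u
  have := nb_sup_add_nb_sup_le_of_isSinglet hp hua hva hub hvb
    fun _ _ => isolate_qAel_sup_isolate_qBel_rel hm hm2 u
  rw [pdist, pdist, sup_comm (qAel n m hm), nb_qAel hm hm2, nb_qBel hm hm2]
  omega

end StandardElements

end RTN

theorem path_sum_lower_bound_general {V : Type*} [Fintype V] (G : SimpleGraph V) (A B : Set V)
    {n m : ℕ} (hm2 : 2 ≤ m) (hm : m % 2 = 0)
    (q : V → Setoid (RTN.BX n m hm))
    (hA : ∀ v ∈ A, q v = RTN.qAel n m hm) (hB : ∀ v ∈ B, q v = RTN.qBel n m hm) :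
    ∀ x ∈ A, ∀ y ∈ B, ∀ L : G.Walk x y,
      RTN.wkSum (RTN.partEZ q) L ≥
        2 * ((n : ℤ) - if ∀ v ∈ L.support, ∀ u, ¬ RTN.IsSinglet (q v) u then 1 else 0) ∧
      2 ∣ RTN.wkSum (RTN.partEZ q) L := by
  intro x hx y hy L
  refine ⟨?_, ?_⟩
  · split_ifs with hall
    · have hL := RTN.pdist_le_wkSum q L
      rw [hA x hx, hB y hy] at hL
      linarith [RTN.two_mul_sub_two_le_pdist_qAel_qBel (n := n) hm hm2]
    · push Not at hall
      obtain ⟨v, hv, u, hu⟩ := hall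
      have hto := RTN.pdist_le_wkSum q (L.takeUntil v hv)
      have hfrom := RTN.pdist_le_wkSum q (L.dropUntil v hv)
      rw [hA x hx] at hto
      rw [hB y hy] at hfrom
      rw [RTN.wkSum_eq_add_of_mem_support _ L hv]
      linarith [RTN.two_mul_le_pdist_add_pdist_of_isSinglet hm hm2 hu]
  · have hpar := RTN.two_dvd_wkSum_sub q L
    rw [hA x hx, hB y hy, RTN.nb_qAel hm hm2, RTN.nb_qBel hm hm2] at hpar
    omega

/-- For any configuration `q : V → P_{2n}` with `q ≡ q_A` on `A` and
`q ≡ q_B` on `B`, and every path `L ∈ 𝒫_{A,B}`: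
`Σ_{e={x,y}∈L} d(q(x),q(y)) ≥ 2(n - δ_{b_L,(1,…,1)})`, and the sum is even. -/
theorem path_sum_lower_bound {V : Type*} [Fintype V] (G : SimpleGraph V)
    (w : Sym2 V → ℝ) (hw : ∀ e, 0 ≤ w e) (A B C : Set V) (hbdy : RTN.Bdy A B C)
    {n m : ℕ} (hn : 2 ≤ n) (hm2 : 2 ≤ m) (hm : m % 2 = 0)
    (q : V → Setoid (RTN.BX n m hm))
    (hA : ∀ v ∈ A, q v = RTN.qAel n m hm) (hB : ∀ v ∈ B, q v = RTN.qBel n m hm) :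
    ∀ x ∈ A, ∀ y ∈ B, ∀ L : G.Walk x y,
      RTN.wkSum (RTN.partEZ q) L ≥
        2 * ((n : ℤ) - if ∀ v ∈ L.support, ∀ u, ¬ RTN.IsSinglet (q v) u then 1 else 0) ∧
      2 ∣ RTN.wkSum (RTN.partEZ q) L :=
  path_sum_lower_bound_general G A B hm2 hm q hA hB
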